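/- In the atomic object O(Seq), every reachable state (h, h_s) satisfies that h_s is a linearization of h: there is a history h' obtained from h by appending matching returns for some unmatched calls of h and deleting the remaining unmatched calls, such that h_s is a permutation of h' preserving the order between each return action and each later call action. -/

import Mathlib

/-- Call and return actions, tagged by a method name `M`, argument `x` or
return value `y`, and an invocation identifier `k`. -/
inductive Act : Type
  | call (M x k : ℕ) : Act
  | ret (y k : ℕ) : Act
deriving DecidableEq

def Act.isCall : Act → Prop | .call _ _ _ => True | _ => False
def Act.isRet : Act → Prop | .ret _ _ => True | _ => False
/-- The invocation identifier of an action. -/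
def Act.id : Act → ℕ | .call _ _ k => k | .ret _ k => k

/-- A history is a sequence of call and return actions. -/
abbrev History := List Act

/-- Invocation `k` has a call but no matching return in `h`. -/
def UnmatchedCall (h : History) (k : ℕ) : Prop :=
  (∃ M x, Act.call M x k ∈ h) ∧ ∀ y, Act.ret y k ∉ h

/-- Invocation identifier `k` occurs in `h`. -/
def IdOccurs (k : ℕ) (h : History) : Prop := ∃ a ∈ h, a.id = k

/-- A sequential history: every call is immediately followed by its matching return. -/
inductive IsSequential : History → Prop
  | nil : IsSequential []
  | cons (M x k y : ℕ) {t : History} :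
      IsSequential t → IsSequential (Act.call M x k :: Act.ret y k :: t)

open Classical in
/-- `h'` is obtained from `h` by appending matching returns for the unmatched calls
whose identifiers lie in some set `K`, and deleting the remaining unmatched calls. -/
noncomputable def IsCompletion (h h' : History) : Prop :=
  ∃ (K : Set ℕ) (rets : List Act),
    (∀ k ∈ K, UnmatchedCall h k) ∧
    (∀ a ∈ rets, ∃ y k, a = Act.ret y k ∧ k ∈ K) ∧
    (∀ k ∈ K, ∃ y, Act.ret y k ∈ rets) ∧
    h' = h.filter (fun a => decide (¬ (a.isCall ∧ UnmatchedCall h a.id ∧ a.id ∉ K))) ++ rets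

/-- Some occurrence of `a` precedes some occurrence of `b` in `h`. -/
def Precedes (h : History) (a b : Act) : Prop :=
  ∃ i j : ℕ, i < j ∧ h[i]? = some a ∧ h[j]? = some b

/-- `hs` is a linearization of `h` (`h ⊑ hs`): some completion `h'` of `h`
is a permutation of `hs` that preserves the order between return actions
and later call actions. -/
def Linearizes (h hs : History) : Prop :=
  ∃ h', IsCompletion h h' ∧ h'.Perm hs ∧
    ∀ r c, r.isRet → c.isCall → Precedes h' r c → Precedes hs r c

/-- A labeled transition system with an initial state. -/
structure LTS (S L : Type*) where
  init : S
  tr : S → L → S → Prop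

/-- Labels of the atomic object: call/return actions, or linearization points. -/
inductive ALabel : Type
  | act (a : Act)
  | lin (k : ℕ)

/-- Observable labels are the call and return actions. -/
def ALabel.isObs : ALabel → Prop | .act _ => True | .lin _ => False

/-- Transition relation of the atomic object `O(Seq)`: a call action appends a fresh
call to the history; a return action appends a return to the history provided it is
pending and occurs in the linearization; a linearization point extends the
linearization with a completed pending invocation, staying within `Seq`. -/
def AtomicTr (Seq : Set History) :
    History × History → ALabel → History × History → Prop :=
  fun st l st' =>
    match l with
    | .act (.call M x k) =>
        ¬ IdOccurs k st.1 ∧ st' = (st.1 ++ [Act.call M x k], st.2)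
    | .act (.ret y k) =>
        UnmatchedCall st.1 k ∧ Act.ret y k ∈ st.2 ∧
        st' = (st.1 ++ [Act.ret y k], st.2)
    | .lin k =>
        ∃ M x y, Act.call M x k ∈ st.1 ∧ UnmatchedCall st.1 k ∧ ¬ IdOccurs k st.2 ∧
          st' = (st.1, st.2 ++ [Act.call M x k, Act.ret y k]) ∧
          st.2 ++ [Act.call M x k, Act.ret y k] ∈ Seq

/-- The atomic object `O(Seq)` as an LTS over pairs (history, linearization). -/
def AtomicObject (Seq : Set History) : LTS (History × History) ALabel :=
  ⟨([], []), AtomicTr Seq⟩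

/-- Reachable states of an LTS. -/
inductive Reachable {S L : Type*} (O : LTS S L) : S → Prop
  | init : Reachable O O.init
  | step {s a s'} : Reachable O s → O.tr s a s' → Reachable O s'

/-!
Project a state `(h, hs)` of `O(Seq)` onto a single invocation `k`. Along every run the pair of
projections passes through the stages idle, pending, linearized and returned, and a return of `h`
that precedes a call already linearized in `hs` also precedes it in `hs`. Completing `h` by the
returns of exactly those pending calls that are already linearized yields a history with the same
projection as `hs` onto every invocation, hence a permutation of `hs`; the order invariant gives
the real-time condition.
-/

open List

theorem pair_sublist_iff {α : Type*} {a b : α} {l : List α} :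
    [a, b] <+ l ↔ ∃ l₁ l₂, l = l₁ ++ l₂ ∧ a ∈ l₁ ∧ b ∈ l₂ := by
  rw [cons_sublist_iff]; simp only [singleton_sublist]

theorem pair_sublist_of_append_of_notMem {α : Type*} {a b : α} {l₁ l₂ : List α}
    (h : [a, b] <+ l₁ ++ l₂) (hb : b ∉ l₂) : [a, b] <+ l₁ := by
  obtain ⟨u, v, huv, hu, hv⟩ := sublist_append_iff.mp h
  have hbv : b ∉ v := fun hbv => hb (hv.subset hbv)
  rcases u with _ | ⟨_, _ | ⟨_, _ | ⟨_, _⟩⟩⟩ <;>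
    simp only [nil_append, cons_append, cons.injEq, reduceCtorEq, and_false] at huv
  · simp [← huv] at hbv
  · simp [← huv.2] at hbv
  · rwa [huv.1, huv.2.1]

theorem precedes_iff_sublist {l : History} {a b : Act} : Precedes l a b ↔ [a, b] <+ l := by
  rw [pair_sublist_iff]
  constructor
  · rintro ⟨i, j, hij, ha, hb⟩
    refine ⟨l.take j, l.drop j, (take_append_drop j l).symm, ?_, ?_⟩
    · exact mem_of_getElem? (by rwa [getElem?_take_of_lt hij])
    · exact mem_of_getElem? (i := 0) (by rwa [getElem?_drop, Nat.add_zero])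
  · rintro ⟨l₁, l₂, rfl, ha, hb⟩
    obtain ⟨i, hi, rfl⟩ := getElem_of_mem ha
    obtain ⟨j, hj, rfl⟩ := getElem_of_mem hb
    refine ⟨i, l₁.length + j, by omega, ?_, ?_⟩
    · simp [getElem?_append_left hi, hi]
    · simp [getElem?_append_right]

def projInv (k : ℕ) (l : History) : History := l.filter (·.id = k)

theorem mem_projInv {k : ℕ} {l : History} {a : Act} : a ∈ projInv k l ↔ a ∈ l ∧ a.id = k := by
  simp [projInv]

theorem projInv_eq_nil_iff {k : ℕ} {l : History} : projInv k l = [] ↔ ¬ IdOccurs k l := by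
  simp [projInv, IdOccurs]

theorem projInv_append (k : ℕ) (l l' : History) :
    projInv k (l ++ l') = projInv k l ++ projInv k l' :=
  filter_append _ _

theorem projInv_append_of_forall_id_eq {k₀ : ℕ} {l' : History} (hl' : ∀ a ∈ l', a.id = k₀)
    (k : ℕ) (l : History) :
    projInv k (l ++ l') = if k₀ = k then projInv k l ++ l' else projInv k l := by
  rw [projInv_append]
  split_ifs with hk
  · subst hk
    have hself : projInv k₀ l' = l' := filter_eq_self.mpr fun a ha => by simp [hl' a ha]
    rw [hself]
  · have hnil : projInv k l' = [] := filter_eq_nil_iff.mpr fun a ha => by simp [hl' a ha, hk]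
    rw [hnil, append_nil]

theorem projInv_filter (k : ℕ) (p : Act → Bool) (l : History) :
    projInv k (l.filter p) = (projInv k l).filter p :=
  filter_comm _ _ _

theorem perm_of_forall_projInv_perm {l₁ l₂ : History} (h : ∀ k, projInv k l₁ ~ projInv k l₂) :
    l₁ ~ l₂ := by
  refine perm_iff_count.mpr fun a => ?_
  have hcount := (h a.id).count_eq a
  rwa [projInv, projInv, count_filter (by simp), count_filter (by simp)] at hcount

theorem unmatchedCall_iff_projInv {k : ℕ} {l : History} :
    UnmatchedCall l k ↔ UnmatchedCall (projInv k l) k := by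
  simp [UnmatchedCall, mem_projInv, Act.id]

/-- The stages an invocation `k` passes through, as seen in the projections onto `k` of the
history and of the linearization of a state of the atomic object. -/
inductive InvStage (k : ℕ) : History → History → Prop
  | idle : InvStage k [] []
  | pending (M x : ℕ) : InvStage k [.call M x k] []
  | linearized (M x y : ℕ) : InvStage k [.call M x k] [.call M x k, .ret y k]
  | returned (M x y : ℕ) : InvStage k [.call M x k, .ret y k] [.call M x k, .ret y k]

namespace InvStage

variable {k : ℕ} {p q : History}

theorem call_mem (hpq : InvStage k p q) {a : Act} (ha : a ∈ q) (hc : a.isCall) : a ∈ p := by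
  cases hpq <;> cases a <;> simp_all [Act.isCall]

theorem ret_mem (hpq : InvStage k p q) {a : Act} (ha : a ∈ p) (hr : a.isRet) : a ∈ q := by
  cases hpq <;> simp_all [Act.isRet]

theorem snd_eq_nil (hq : InvStage k [] q) : q = [] := by
  cases hq; rfl

theorem append_ret {y : ℕ} (hpq : InvStage k p q) (hp : ∀ y', Act.ret y' k ∉ p)
    (hq : Act.ret y k ∈ q) : InvStage k (p ++ [.ret y k]) q := by
  cases hpq with
  | idle | pending => simp at hq
  | linearized M x y' =>
    obtain rfl : y = y' := by simpa using hq
    exact returned M x y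
  | returned M x y' => simp at hp

theorem linearize {M x y : ℕ} (hp : InvStage k p []) (hc : Act.call M x k ∈ p) :
    InvStage k p [.call M x k, .ret y k] := by
  cases hp with
  | idle => simp at hc
  | pending M' x' =>
    obtain ⟨rfl, rfl⟩ : M = M' ∧ x = x' := by simpa using hc
    exact linearized M x y

theorem exists_ret_mem (hpq : InvStage k p q) (hp : UnmatchedCall p k) (hq : q ≠ []) :
    ∃ y, Act.ret y k ∈ q := by
  cases hpq with
  | idle | pending => exact absurd rfl hq
  | linearized M x y => exact ⟨y, by simp⟩
  | returned M x y => exact absurd (by simp) (hp.2 y)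

end InvStage

structure AtomicInv (h hs : History) : Prop where
  stage : ∀ k, InvStage k (projInv k h) (projInv k hs)
  order : ∀ r c, r.isRet → c.isCall → [r, c] <+ h → c ∈ hs → [r, c] <+ hs

namespace AtomicInv

variable {h hs : History}

theorem call_mem (I : AtomicInv h hs) {a : Act} (ha : a ∈ hs) (hc : a.isCall) : a ∈ h :=
  (mem_projInv.mp ((I.stage a.id).call_mem (mem_projInv.mpr ⟨ha, rfl⟩) hc)).1

theorem ret_mem (I : AtomicInv h hs) {a : Act} (ha : a ∈ h) (hr : a.isRet) : a ∈ hs :=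
  (mem_projInv.mp ((I.stage a.id).ret_mem (mem_projInv.mpr ⟨ha, rfl⟩) hr)).1

theorem init : AtomicInv [] [] :=
  ⟨fun _ => .idle, by simp⟩

theorem append_call (I : AtomicInv h hs) {M x k : ℕ} (hk : ¬ IdOccurs k h) :
    AtomicInv (h ++ [.call M x k]) hs where
  stage k' := by
    rw [projInv_append_of_forall_id_eq (k₀ := k) (by simp [Act.id])]
    split_ifs with hkk'
    · subst hkk'
      have hnil : projInv k h = [] := projInv_eq_nil_iff.mpr hk
      have hst := I.stage k
      rw [hnil] at hst
      rw [hnil, hst.snd_eq_nil]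
      exact .pending M x
    · exact I.stage k'
  order r c hr hc hrc hcs := by
    refine I.order r c hr hc (pair_sublist_of_append_of_notMem hrc ?_) hcs
    rintro hc'
    obtain rfl : c = .call M x k := by simpa using hc'
    exact hk ⟨_, I.call_mem hcs hc, rfl⟩

theorem append_ret (I : AtomicInv h hs) {y k : ℕ} (hu : UnmatchedCall h k)
    (hy : Act.ret y k ∈ hs) : AtomicInv (h ++ [.ret y k]) hs where
  stage k' := by
    rw [projInv_append_of_forall_id_eq (k₀ := k) (by simp [Act.id])]
    split_ifs with hkk'
    · subst hkk'
      have hp : ∀ y', Act.ret y' k ∉ projInv k h := fun y' hy' => hu.2 y' (mem_projInv.mp hy').1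
      exact (I.stage k).append_ret hp (mem_projInv.mpr ⟨hy, rfl⟩)
    · exact I.stage k'
  order r c hr hc hrc hcs := by
    refine I.order r c hr hc (pair_sublist_of_append_of_notMem hrc ?_) hcs
    rintro hc'
    obtain rfl : c = .ret y k := by simpa using hc'
    exact hc

theorem linearize (I : AtomicInv h hs) {M x y k : ℕ} (hc : Act.call M x k ∈ h)
    (hk : ¬ IdOccurs k hs) : AtomicInv h (hs ++ [.call M x k, .ret y k]) where
  stage k' := by
    rw [projInv_append_of_forall_id_eq (k₀ := k) (by simp [Act.id])]
    split_ifs with hkk'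
    · subst hkk'
      have hnil : projInv k hs = [] := projInv_eq_nil_iff.mpr hk
      have hst := I.stage k
      rw [hnil] at hst
      rw [hnil, nil_append]
      exact hst.linearize (mem_projInv.mpr ⟨hc, rfl⟩)
    · exact I.stage k'
  order r c hr hc' hrc hcs := by
    rcases mem_append.mp hcs with hcs | hcs
    · exact (I.order r c hr hc' hrc hcs).trans (sublist_append_left _ _)
    · obtain rfl : c = .call M x k := by
        rcases mem_pair.mp hcs with rfl | rfl
        · rfl
        · exact hc'.elim
      have hrs : r ∈ hs := I.ret_mem (hrc.subset (by simp)) hr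
      exact (singleton_sublist.mpr hrs).append (singleton_sublist.mpr (by simp))

theorem step {Seq : Set History} {s s' : History × History} {l : ALabel}
    (I : AtomicInv s.1 s.2) (htr : AtomicTr Seq s l s') : AtomicInv s'.1 s'.2 := by
  match l, htr with
  | .act (.call M x k), ⟨hk, hs'⟩ => subst hs'; exact I.append_call hk
  | .act (.ret y k), ⟨hu, hy, hs'⟩ => subst hs'; exact I.append_ret hu hy
  | .lin k, ⟨M, x, y, hc, _, hk, hs', _⟩ => subst hs'; exact I.linearize hc hk

theorem of_reachable {Seq : Set History} {s : History × History}
    (hr : Reachable (AtomicObject Seq) s) : AtomicInv s.1 s.2 := by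
  induction hr with
  | init => exact init
  | step _ htr I => exact I.step htr

end AtomicInv

def linearizedPending (h hs : History) : Set ℕ := {k | UnmatchedCall h k ∧ IdOccurs k hs}

open Classical in
noncomputable def linearizedReturns (h hs : History) : History :=
  hs.filter (fun a => decide (a.isRet ∧ UnmatchedCall h a.id))

theorem mem_linearizedReturns {h hs : History} {a : Act} :
    a ∈ linearizedReturns h hs ↔ a ∈ hs ∧ a.isRet ∧ UnmatchedCall h a.id := by
  simp [linearizedReturns]

open Classical in
/-- Pending calls already linearized in `hs` are completed with their returns from `hs`;
the other pending calls are dropped. -/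
noncomputable def completionBy (h hs : History) : History :=
  h.filter (fun a => decide (¬ (a.isCall ∧ UnmatchedCall h a.id ∧
    a.id ∉ linearizedPending h hs))) ++ linearizedReturns h hs

open Classical in
theorem InvStage.completion_eq_snd {k : ℕ} {p q : History} (hpq : InvStage k p q)
    {U K : ℕ → Prop} (hU : U k ↔ UnmatchedCall p k) (hK : K k ↔ U k ∧ q ≠ []) :
    p.filter (fun a => ¬(a.isCall ∧ U a.id ∧ ¬K a.id)) ++ q.filter (fun a => a.isRet ∧ U a.id)
      = q := by
  cases hpq <;> simp_all [UnmatchedCall, Act.isCall, Act.isRet, Act.id]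

namespace AtomicInv

variable {h hs : History}

theorem projInv_completionBy (I : AtomicInv h hs) (k : ℕ) :
    projInv k (completionBy h hs) = projInv k hs := by
  rw [completionBy, linearizedReturns, projInv_append, projInv_filter, projInv_filter]
  refine (I.stage k).completion_eq_snd (U := (UnmatchedCall h ·))
    (K := (· ∈ linearizedPending h hs)) unmatchedCall_iff_projInv ?_
  exact and_congr Iff.rfl projInv_eq_nil_iff.not_left.symm

theorem isCompletion_completionBy (I : AtomicInv h hs) : IsCompletion h (completionBy h hs) := by
  refine ⟨linearizedPending h hs, linearizedReturns h hs, fun k hk => hk.1, ?_, ?_, rfl⟩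
  · intro a ha
    obtain ⟨has, hret, hu⟩ := mem_linearizedReturns.mp ha
    cases a with
    | call => exact hret.elim
    | ret y k => exact ⟨y, k, rfl, hu, _, has, rfl⟩
  · rintro k ⟨hu, hocc⟩
    obtain ⟨y, hy⟩ := (I.stage k).exists_ret_mem (unmatchedCall_iff_projInv.mp hu)
      (projInv_eq_nil_iff.not_left.mpr hocc)
    exact ⟨y, mem_linearizedReturns.mpr ⟨(mem_projInv.mp hy).1, trivial, hu⟩⟩

theorem linearizes (I : AtomicInv h hs) : Linearizes h hs := by
  have hperm : completionBy h hs ~ hs :=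
    perm_of_forall_projInv_perm fun k => .of_eq (I.projInv_completionBy k)
  refine ⟨_, I.isCompletion_completionBy, hperm, fun r c hr hc hrc => ?_⟩
  rw [precedes_iff_sublist] at hrc ⊢
  have hc_notMem : c ∉ linearizedReturns h hs := fun hmem => by
    cases c <;> simp_all [mem_linearizedReturns, Act.isCall, Act.isRet]
  have hrc_h := (pair_sublist_of_append_of_notMem hrc hc_notMem).trans filter_sublist
  exact I.order r c hr hc hrc_h (hperm.subset (hrc.subset (by simp)))

end AtomicInv

/-- In every reachable state `(h, hs)` of the atomic object `O(Seq)`,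
the component `hs` is a linearization of the history `h`: some completion of `h`
(appending matching returns for some unmatched calls and deleting the remaining
unmatched calls) is a permutation of `hs` preserving the order between each return
action and each later call action. -/
theorem atomic_reachable_linearizes (Seq : Set History)
    (h hs : History) (hr : Reachable (AtomicObject Seq) (h, hs)) :
    Linearizes h hs :=
  (AtomicInv.of_reachable hr).linearizes
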